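/- arXiv:2102.12230 — 2 statements merged into one kernel-verified Lean document; each statement's English description precedes it below -/
import Mathlib

section
/- Let (X, 𝒳) be a measurable space, φ : X → ℝ bounded measurable, and (X_n)_{n≥0}, (W_n)_{n≥0} two sequences of X-valued random elements on a common probability space such that: (i) X_n has the same law as W_{n+1} for every n ≥ 0; (ii) there is an ℕ-valued random variable τ with Σ_{n≥0} P(τ > n) < ∞ such that for every n, X_n = W_n almost surely on the event {τ ≤ n}; and (iii) E[φ(X_n)] → a as n → ∞ for some real a. Then for every 0 ≤ k ≤ m, the time-averaged estimator (1/(m−k+1)) Σ_{n=k}^{m} φ(X_n) + Σ_{n=k+1}^{τ−1} min{1, (n−k)/(m−k+1)} (φ(X_n) − φ(W_n)) is integrable and has expectation a. -/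
/-!
Let bₙ = E φ(Xₙ), which also equals E φ(Wₙ₊₁). The correction term is the random series
∑_{n<τ} wₙ (φ(Xₙ) − φ(Wₙ)); because the chains agree on {τ ≤ n}, its n-th term has expectation
wₙ (bₙ − bₙ₋₁), and it is dominated by 2C·P(τ > n), so expectation and summation commute.
The weights wₙ rise from 0 to 1 in equal steps 1/(m−k+1) between n = k and n = m + 1, so
summation by parts turns the N-th partial sum of the expected series into
b_N − (m−k+1)⁻¹ ∑_{n=k}^m bₙ once N > m. As N → ∞ this tends to a minus the expectation of the
time-average term.
-/

open MeasureTheory Filter Topology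

lemma MeasureTheory.integrable_tsum_of_summable_integral_norm {α E ι : Type*} [MeasurableSpace α]
    {μ : Measure α} [NormedAddCommGroup E] [CompleteSpace E] [Countable ι] {F : ι → α → E}
    (hF_int : ∀ i, Integrable (F i) μ) (hF_sum : Summable fun i ↦ ∫ a, ‖F i a‖ ∂μ) :
    Integrable (fun a ↦ ∑' i, F i a) μ := by
  set f : ι → Lp E 1 μ := fun i ↦ (hF_int i).toL1 (F i)
  have hf : ∑' i, ‖f i‖ₑ ≠ ⊤ := by
    simp_rw [← ofReal_norm, f, L1.norm_of_fun_eq_integral_norm]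
    rw [← ENNReal.ofReal_tsum_of_nonneg (fun i ↦ integral_nonneg fun a ↦ norm_nonneg _) hF_sum]
    exact ENNReal.ofReal_ne_top
  refine (L1.integrable_coeFn (∑' i, f i)).congr ?_
  filter_upwards [Lp.coeFn_tsum hf, ae_all_iff.2 fun i ↦ (hF_int i).coeFn_toL1] with a ha hfa
  rw [ha]
  exact tsum_congr hfa

lemma sum_range_eq_tsum_indicator {Ω E : Type*} [AddCommMonoid E] [TopologicalSpace E]
    (τ : Ω → ℕ) (G : ℕ → Ω → E) (ω : Ω) :
    ∑ n ∈ Finset.range (τ ω), G n ω = ∑' n, {ω | n < τ ω}.indicator (G n) ω := by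
  rw [sum_eq_tsum_indicator]
  refine tsum_congr fun n ↦ ?_
  by_cases h : n < τ ω <;> simp [h]

section RandomSum

variable {Ω E : Type*} [MeasurableSpace Ω] {P : Measure Ω} [IsFiniteMeasure P]
  [NormedAddCommGroup E] {τ : Ω → ℕ} {G : ℕ → Ω → E} {C : ℝ}

lemma integrable_indicator_lt (hG : ∀ n, AEStronglyMeasurable (G n) P)
    (hGC : ∀ n ω, ‖G n ω‖ ≤ C) (hτ : Measurable τ) (n : ℕ) :
    Integrable ({ω | n < τ ω}.indicator (G n)) P :=
  (Integrable.of_bound (hG n) C (ae_of_all _ (hGC n))).indicator (hτ measurableSet_Ioi)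

lemma summable_integral_norm_indicator_lt (hGC : ∀ n ω, ‖G n ω‖ ≤ C) (hτ : Measurable τ)
    (htail : Summable fun n ↦ (P {ω | n < τ ω}).toReal) :
    Summable fun n ↦ ∫ ω, ‖{ω | n < τ ω}.indicator (G n) ω‖ ∂P := by
  refine .of_nonneg_of_le (fun n ↦ integral_nonneg fun ω ↦ norm_nonneg _) (fun n ↦ ?_)
    (htail.mul_left C)
  simp_rw [norm_indicator_eq_indicator_norm,
    integral_indicator (measurableSet_lt measurable_const hτ)]
  exact (Real.le_norm_self _).trans <| norm_setIntegral_le_of_norm_le_const (measure_lt_top P _)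
    fun ω _ ↦ (norm_norm _).trans_le (hGC n ω)

lemma integrable_sum_range [CompleteSpace E] (hG : ∀ n, AEStronglyMeasurable (G n) P)
    (hGC : ∀ n ω, ‖G n ω‖ ≤ C) (hτ : Measurable τ)
    (htail : Summable fun n ↦ (P {ω | n < τ ω}).toReal) :
    Integrable (fun ω ↦ ∑ n ∈ Finset.range (τ ω), G n ω) P := by
  simp_rw [sum_range_eq_tsum_indicator]
  exact integrable_tsum_of_summable_integral_norm (integrable_indicator_lt hG hGC hτ)
    (summable_integral_norm_indicator_lt hGC hτ htail)

lemma hasSum_integral_sum_range [NormedSpace ℝ E] (hG : ∀ n, AEStronglyMeasurable (G n) P)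
    (hGC : ∀ n ω, ‖G n ω‖ ≤ C) (hτ : Measurable τ)
    (htail : Summable fun n ↦ (P {ω | n < τ ω}).toReal)
    (hzero : ∀ n, ∀ᵐ ω ∂P, τ ω ≤ n → G n ω = 0) :
    HasSum (fun n ↦ ∫ ω, G n ω ∂P) (∫ ω, ∑ n ∈ Finset.range (τ ω), G n ω ∂P) := by
  have hG_eq : ∀ n, ∫ ω, G n ω ∂P = ∫ ω, {ω | n < τ ω}.indicator (G n) ω ∂P := fun n ↦
    integral_congr_ae <| by
      filter_upwards [hzero n] with ω hω
      by_cases h : n < τ ω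
      · simp [h]
      · simp [h, hω (not_lt.1 h)]
  simp_rw [hG_eq, sum_range_eq_tsum_indicator]
  exact hasSum_integral_of_summable_integral_norm (integrable_indicator_lt hG hGC hτ)
    (summable_integral_norm_indicator_lt hGC hτ htail)

end RandomSum

lemma Finset.sum_range_mul_succ_sub {R : Type*} [CommRing R] (c b : ℕ → R) (N : ℕ) :
    ∑ n ∈ range N, c (n + 1) * (b (n + 1) - b n) =
      c N * b N - c 0 * b 0 - ∑ n ∈ range N, (c (n + 1) - c n) * b n := by
  have h : ∀ n, c (n + 1) * (b (n + 1) - b n) =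
      (c (n + 1) * b (n + 1) - c n * b n) - (c (n + 1) - c n) * b n := fun n ↦ by ring
  rw [sum_congr rfl fun n _ ↦ h n, sum_sub_distrib, sum_range_sub (fun n ↦ c n * b n)]

/-- The estimator's weight `min 1 ((n - k) / (m - k + 1))`, clamped below at `0` so that it
vanishes for `n ≤ k` and the correction term can be summed over all `n < τ`. -/
noncomputable def rampWeight (k m n : ℕ) : ℝ := max 0 (min 1 (((n : ℝ) - k) / ((m : ℝ) - k + 1)))

section RampWeight

variable {k m n N : ℕ}

lemma natCast_sub_natCast_add_one_pos (hkm : k ≤ m) : (0 : ℝ) < (m : ℝ) - k + 1 := by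
  have : (k : ℝ) ≤ m := by exact_mod_cast hkm
  linarith

lemma abs_rampWeight_le_one : |rampWeight k m n| ≤ 1 := by
  rw [abs_of_nonneg (le_max_left _ _)]
  exact max_le zero_le_one (min_le_left _ _)

lemma rampWeight_of_le (hkm : k ≤ m) (hn : n ≤ k) : rampWeight k m n = 0 := by
  have : ((n : ℝ) - k) / ((m : ℝ) - k + 1) ≤ 0 :=
    div_nonpos_of_nonpos_of_nonneg (by simpa using hn) (natCast_sub_natCast_add_one_pos hkm).le
  exact max_eq_left ((min_le_right _ _).trans this)

lemma rampWeight_of_ge (hkm : k ≤ m) (hn : k ≤ n) :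
    rampWeight k m n = min 1 (((n : ℝ) - k) / ((m : ℝ) - k + 1)) := by
  refine max_eq_right (le_min zero_le_one (div_nonneg ?_ (natCast_sub_natCast_add_one_pos hkm).le))
  simpa using hn

lemma rampWeight_of_lt (hkm : k ≤ m) (hn : m < n) : rampWeight k m n = 1 := by
  rw [rampWeight_of_ge hkm (hkm.trans hn.le), min_eq_left]
  rw [one_le_div (natCast_sub_natCast_add_one_pos hkm)]
  have : (m : ℝ) + 1 ≤ n := by exact_mod_cast hn
  linarith

lemma rampWeight_of_mem_Icc (hkm : k ≤ m) (hn : n ∈ Finset.Icc k (m + 1)) :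
    rampWeight k m n = ((n : ℝ) - k) / ((m : ℝ) - k + 1) := by
  obtain ⟨hkn, hnm⟩ := Finset.mem_Icc.1 hn
  rw [rampWeight_of_ge hkm hkn, min_eq_right]
  rw [div_le_one (natCast_sub_natCast_add_one_pos hkm)]
  have : (n : ℝ) ≤ m + 1 := by exact_mod_cast hnm
  linarith

lemma rampWeight_succ_sub_of_mem_Icc (hkm : k ≤ m) (hn : n ∈ Finset.Icc k m) :
    rampWeight k m (n + 1) - rampWeight k m n = 1 / ((m : ℝ) - k + 1) := by
  obtain ⟨hkn, hnm⟩ := Finset.mem_Icc.1 hn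
  rw [rampWeight_of_mem_Icc hkm (by simp; omega), rampWeight_of_mem_Icc hkm (by simp; omega)]
  push_cast
  ring

lemma rampWeight_succ_sub_of_notMem_Icc (hkm : k ≤ m) (hn : n ∉ Finset.Icc k m) :
    rampWeight k m (n + 1) - rampWeight k m n = 0 := by
  rcases (show n < k ∨ m < n by simp only [Finset.mem_Icc] at hn; omega) with h | h
  · rw [rampWeight_of_le hkm h, rampWeight_of_le hkm h.le, sub_zero]
  · rw [rampWeight_of_lt hkm (by omega), rampWeight_of_lt hkm h, sub_self]

lemma sum_range_rampWeight_succ_sub_mul (hkm : k ≤ m) (hN : m < N) (b : ℕ → ℝ) :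
    ∑ n ∈ Finset.range N, (rampWeight k m (n + 1) - rampWeight k m n) * b n =
      1 / ((m : ℝ) - k + 1) * ∑ n ∈ Finset.Icc k m, b n := by
  have hsub : Finset.Icc k m ⊆ Finset.range N := fun n hn ↦ by
    simp only [Finset.mem_Icc, Finset.mem_range] at hn ⊢
    omega
  rw [← Finset.sum_subset hsub fun n _ hn ↦ by
    rw [rampWeight_succ_sub_of_notMem_Icc hkm hn, zero_mul], Finset.mul_sum]
  exact Finset.sum_congr rfl fun n hn ↦ by rw [rampWeight_succ_sub_of_mem_Icc hkm hn]

lemma tendsto_sum_range_rampWeight_mul_sub (hkm : k ≤ m) {b : ℕ → ℝ} {a : ℝ}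
    (hb : Tendsto b atTop (𝓝 a)) :
    Tendsto (fun N ↦ ∑ n ∈ Finset.range N, rampWeight k m (n + 1) * (b (n + 1) - b n)) atTop
      (𝓝 (a - 1 / ((m : ℝ) - k + 1) * ∑ n ∈ Finset.Icc k m, b n)) := by
  refine (hb.sub_const _).congr' ?_
  filter_upwards [eventually_gt_atTop m] with N hN
  rw [Finset.sum_range_mul_succ_sub, rampWeight_of_lt hkm hN, rampWeight_of_le hkm k.zero_le,
    sum_range_rampWeight_succ_sub_mul hkm hN]
  ring

lemma sum_Ico_min_mul_eq_sum_range_rampWeight_mul (hkm : k ≤ m) (f : ℕ → ℝ) (N : ℕ) :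
    ∑ n ∈ Finset.Ico (k + 1) N, min 1 (((n : ℝ) - k) / ((m : ℝ) - k + 1)) * f n =
      ∑ n ∈ Finset.range N, rampWeight k m n * f n := by
  have hsub : Finset.Ico (k + 1) N ⊆ Finset.range N := fun n hn ↦
    Finset.mem_range.2 (Finset.mem_Ico.1 hn).2
  rw [← Finset.sum_subset hsub fun n hn hn' ↦ by
    rw [rampWeight_of_le hkm (by simp only [Finset.mem_Ico, Finset.mem_range] at hn hn'; omega),
      zero_mul]]
  exact Finset.sum_congr rfl fun n hn ↦ by
    rw [rampWeight_of_ge hkm (by simp only [Finset.mem_Ico] at hn; omega)]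

end RampWeight

lemma norm_mul_sub_le_two_mul {c x y C : ℝ} (hc : |c| ≤ 1) (hx : |x| ≤ C) (hy : |y| ≤ C) :
    ‖c * (x - y)‖ ≤ 2 * C := by
  rw [Real.norm_eq_abs, abs_mul]
  refine (mul_le_of_le_one_left (abs_nonneg _) hc).trans ?_
  linarith [abs_sub x y]

lemma integrable_comp_of_abs_le {Ω X : Type*} [MeasurableSpace Ω] [MeasurableSpace X]
    {P : Measure Ω} [IsFiniteMeasure P] {φ : X → ℝ} {C : ℝ} (hφ : Measurable φ)
    (hφC : ∀ x, |φ x| ≤ C) {Y : Ω → X} (hY : Measurable Y) :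
    Integrable (fun ω ↦ φ (Y ω)) P :=
  .of_bound (hφ.comp hY).aestronglyMeasurable C (ae_of_all _ fun ω ↦ hφC (Y ω))

def couplingCorrection {Ω X : Type*} (c : ℕ → ℝ) (φ : X → ℝ) (Xs Ws : ℕ → Ω → X)
    (τ : Ω → ℕ) (ω : Ω) : ℝ :=
  ∑ n ∈ Finset.range (τ ω), c n * (φ (Xs n ω) - φ (Ws n ω))

section Coupling

variable {Ω X : Type*} [MeasurableSpace Ω] [MeasurableSpace X] {P : Measure Ω}
  [IsFiniteMeasure P] {φ : X → ℝ} {C : ℝ} {Xs Ws : ℕ → Ω → X} {τ : Ω → ℕ} {c : ℕ → ℝ}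

lemma integrable_couplingCorrection (hφ : Measurable φ) (hφC : ∀ x, |φ x| ≤ C)
    (hX : ∀ n, Measurable (Xs n)) (hW : ∀ n, Measurable (Ws n)) (hc : ∀ n, |c n| ≤ 1)
    (hτ : Measurable τ) (htail : Summable fun n ↦ (P {ω | n < τ ω}).toReal) :
    Integrable (couplingCorrection c φ Xs Ws τ) P :=
  integrable_sum_range (fun n ↦ by fun_prop)
    (fun n ω ↦ norm_mul_sub_le_two_mul (hc n) (hφC _) (hφC _)) hτ htail

lemma hasSum_integral_couplingCorrection (hφ : Measurable φ) (hφC : ∀ x, |φ x| ≤ C)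
    (hX : ∀ n, Measurable (Xs n)) (hW : ∀ n, Measurable (Ws n))
    (hlaw : ∀ n, P.map (Xs n) = P.map (Ws (n + 1)))
    (hc : ∀ n, |c n| ≤ 1) (hc0 : c 0 = 0)
    (hτ : Measurable τ) (htail : Summable fun n ↦ (P {ω | n < τ ω}).toReal)
    (hfaithful : ∀ n, ∀ᵐ ω ∂P, τ ω ≤ n → Xs n ω = Ws n ω) :
    HasSum (fun n ↦ c (n + 1) * (∫ ω, φ (Xs (n + 1) ω) ∂P - ∫ ω, φ (Xs n ω) ∂P))
      (∫ ω, couplingCorrection c φ Xs Ws τ ω ∂P) := by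
  have hlaw_int : ∀ n, ∫ ω, φ (Ws (n + 1) ω) ∂P = ∫ ω, φ (Xs n ω) ∂P := fun n ↦
    (ProbabilityTheory.IdentDistrib.comp ⟨(hX n).aemeasurable, (hW (n + 1)).aemeasurable,
      hlaw n⟩ hφ).integral_eq.symm
  have hterm : ∀ n, ∫ ω, c (n + 1) * (φ (Xs (n + 1) ω) - φ (Ws (n + 1) ω)) ∂P =
      c (n + 1) * (∫ ω, φ (Xs (n + 1) ω) ∂P - ∫ ω, φ (Xs n ω) ∂P) := fun n ↦ by
    rw [integral_const_mul, integral_sub (integrable_comp_of_abs_le hφ hφC (hX _))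
      (integrable_comp_of_abs_le hφ hφC (hW _)), hlaw_int]
  have hsum := hasSum_integral_sum_range (fun n ↦ by fun_prop)
    (fun n ω ↦ norm_mul_sub_le_two_mul (hc n) (hφC (Xs n ω)) (hφC (Ws n ω))) hτ htail
    fun n ↦ (hfaithful n).mono fun ω h hτn ↦ by simp [h hτn]
  rw [← hasSum_nat_add_iff' 1, Finset.sum_range_one, hc0] at hsum
  simpa only [couplingCorrection, hterm, zero_mul, integral_zero, sub_zero] using hsum

end Coupling

/-- unbiasedness of the time-averaged coupled MCMC estimator
`(1/(m−k+1)) ∑_{n=k}^m φ(X_n)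
  + ∑_{n=k+1}^{τ−1} min{1, (n−k)/(m−k+1)} (φ(X_n) − φ(W_n))`. -/
theorem time_averaged_coupled_mcmc_estimator_unbiased
    {Ω : Type*} [MeasurableSpace Ω] (P : Measure Ω) [IsProbabilityMeasure P]
    {X : Type*} [MeasurableSpace X]
    (φ : X → ℝ) (hφmeas : Measurable φ) (Cφ : ℝ) (hφbdd : ∀ x, |φ x| ≤ Cφ)
    (Xs Ws : ℕ → Ω → X)
    (hXmeas : ∀ n, Measurable (Xs n)) (hWmeas : ∀ n, Measurable (Ws n))
    (hlaw : ∀ n : ℕ, Measure.map (Xs n) P = Measure.map (Ws (n + 1)) P)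
    (τ : Ω → ℕ) (hτmeas : Measurable τ)
    (hτtail : Summable (fun n : ℕ => (P {ω | n < τ ω}).toReal))
    (hfaithful : ∀ n : ℕ, ∀ᵐ ω ∂P, τ ω ≤ n → Xs n ω = Ws n ω)
    (a : ℝ)
    (hconv : Tendsto (fun n => ∫ ω, φ (Xs n ω) ∂P) atTop (nhds a)) :
    ∀ k m : ℕ, k ≤ m →
      Integrable (fun ω =>
        (1 / ((m : ℝ) - (k : ℝ) + 1)) * ∑ n ∈ Finset.Icc k m, φ (Xs n ω) +
        ∑ n ∈ Finset.Ico (k + 1) (τ ω),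
          min 1 (((n : ℝ) - (k : ℝ)) / ((m : ℝ) - (k : ℝ) + 1)) *
            (φ (Xs n ω) - φ (Ws n ω))) P ∧
      ∫ ω, ((1 / ((m : ℝ) - (k : ℝ) + 1)) * ∑ n ∈ Finset.Icc k m, φ (Xs n ω) +
        ∑ n ∈ Finset.Ico (k + 1) (τ ω),
          min 1 (((n : ℝ) - (k : ℝ)) / ((m : ℝ) - (k : ℝ) + 1)) *
            (φ (Xs n ω) - φ (Ws n ω))) ∂P = a := by
  intro k m hkm
  have hφX : ∀ n, Integrable (fun ω ↦ φ (Xs n ω)) P := fun n ↦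
    integrable_comp_of_abs_le hφmeas hφbdd (hXmeas n)
  have hmean : Integrable (fun ω ↦ 1 / ((m : ℝ) - k + 1) * ∑ n ∈ Finset.Icc k m, φ (Xs n ω)) P :=
    (integrable_finsetSum _ fun n _ ↦ hφX n).const_mul _
  have hcorr : Integrable (couplingCorrection (rampWeight k m) φ Xs Ws τ) P :=
    integrable_couplingCorrection hφmeas hφbdd hXmeas hWmeas (fun _ ↦ abs_rampWeight_le_one)
      hτmeas hτtail
  have hcorr_integral : ∫ ω, couplingCorrection (rampWeight k m) φ Xs Ws τ ω ∂P =
      a - 1 / ((m : ℝ) - k + 1) * ∑ n ∈ Finset.Icc k m, ∫ ω, φ (Xs n ω) ∂P :=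
    tendsto_nhds_unique
      (hasSum_integral_couplingCorrection (c := rampWeight k m) hφmeas hφbdd hXmeas hWmeas hlaw
        (fun _ ↦ abs_rampWeight_le_one) (rampWeight_of_le hkm k.zero_le) hτmeas hτtail
        hfaithful).tendsto_sum_nat
      (tendsto_sum_range_rampWeight_mul_sub hkm hconv)
  simp_rw [sum_Ico_min_mul_eq_sum_range_rampWeight_mul hkm, ← couplingCorrection.eq_1]
  refine ⟨hmean.add hcorr, ?_⟩
  rw [integral_add hmean hcorr, hcorr_integral, integral_const_mul,
    integral_finsetSum _ fun n _ ↦ hφX n]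
  ring
end

section
/- Let (ξ_l)_{l≥0} be a sequence of independent, integrable real-valued random variables on a probability space. Suppose there are real numbers (a_l)_{l≥0} and a real number a such that E[ξ_0] = a_0, E[ξ_l] = a_l − a_{l−1} for every l ≥ 1, and a_l → a as l → ∞, and suppose there exist constants C < ∞ and β > 0 such that E[ξ_l²] ≤ C · 2^{−2βl} for every l ≥ 0. Then there exists a probability mass function p on ℕ with p(l) > 0 for all l such that, for any ℕ-valued random variable L with law p independent of (ξ_l), the single-term estimator Z := ξ_L / p(L) is square-integrable with E[Z] = a; that is, Z is an unbiased, finite-variance estimator of a. -/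
/-!
Draw the level `L` geometrically, `p l = (1 - r) r ^ l` with `r = 2 ^ (-β)`. Splitting `Ω` into
the events `{L = l}` and using the independence of `L` and `ξ`, the single-term estimator has
`E[Z²] = ∑ E[ξ_l²] / p l ≤ C / (1 - r) ∑ r ^ l < ∞` and `E[Z] = ∑ E[ξ_l]`, a telescoping series
whose partial sums are the `a_n`.
-/

open MeasureTheory ProbabilityTheory Filter Topology

lemma HasSum.eq_of_tendsto_telescoping {G : Type*} [AddCommGroup G] [TopologicalSpace G]
    [IsTopologicalAddGroup G] [T2Space G] {f a : ℕ → G} {s t : G} (hf : HasSum f s)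
    (h0 : f 0 = a 0) (hsucc : ∀ l, 1 ≤ l → f l = a l - a (l - 1))
    (ha : Tendsto a atTop (𝓝 t)) : s = t := by
  have hpartial : ∀ n, ∑ i ∈ Finset.range (n + 1), f i = a n := by
    intro n
    induction n with
    | zero => simpa using h0
    | succ n ih => rw [Finset.sum_range_succ, ih, hsucc (n + 1) (by omega)]; simp
  refine tendsto_nhds_unique ?_ ha
  exact (hf.tendsto_sum_nat.comp (tendsto_add_atTop_nat 1)).congr hpartial

lemma ProbabilityTheory.IndepFun.setIntegral_preimage_singleton {Ω ι E : Type*}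
    [MeasurableSpace Ω] [MeasurableSpace ι] [MeasurableSingletonClass ι] [MeasurableSpace E]
    {P : Measure Ω} {L : Ω → ι} {X : Ω → E}
    (hL : Measurable L) (hX : Measurable X) (hind : IndepFun L X P) (l : ι) {g : E → ℝ}
    (hg : Measurable g) :
    ∫ ω in L ⁻¹' {l}, g (X ω) ∂P = P.real (L ⁻¹' {l}) * ∫ ω, g (X ω) ∂P :=
  Indep.setIntegral_eq_mul hL.comap_le ((IndepFun_iff_Indep _ _ _).1 hind) hX.aemeasurable
    ⟨{l}, measurableSet_singleton l, rfl⟩ hg.aestronglyMeasurable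

lemma Set.iUnion_preimage_singleton_eq_univ {α β : Type*} (f : α → β) :
    ⋃ b, f ⁻¹' {b} = Set.univ := by
  rw [← Set.preimage_iUnion, Set.iUnion_of_singleton, Set.preimage_univ]

section RandomIndex

variable {Ω ι E : Type*} [MeasurableSpace Ω] [MeasurableSpace ι]
  [MeasurableSingletonClass ι] [MeasurableSpace E] {P : Measure Ω} {L : Ω → ι} {ξ : ι → Ω → E}

lemma setIntegral_comp_randomIndex (hL : Measurable L) (hξ : ∀ l, Measurable (ξ l))
    (hind : IndepFun L (fun ω l => ξ l ω) P) {g : ι → E → ℝ} (hg : ∀ l, Measurable (g l))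
    (l : ι) :
    ∫ ω in L ⁻¹' {l}, g (L ω) (ξ (L ω) ω) ∂P = P.real (L ⁻¹' {l}) * ∫ ω, g l (ξ l ω) ∂P := by
  rw [setIntegral_congr_fun (g := fun ω => g l (ξ l ω)) (hL (measurableSet_singleton l))
    fun ω (hω : L ω = l) => by simp only [hω]]
  exact (hind.comp measurable_id (measurable_pi_apply l)).setIntegral_preimage_singleton
    hL (hξ l) l (hg l)

lemma integrable_comp_randomIndex [Countable ι] (hL : Measurable L)
    (hξ : ∀ l, Measurable (ξ l)) (hind : IndepFun L (fun ω l => ξ l ω) P) {g : ι → E → ℝ}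
    (hg : ∀ l, Measurable (g l))
    (hint : ∀ l, Integrable (fun ω => g l (ξ l ω)) P)
    (hsum : Summable fun l => P.real (L ⁻¹' {l}) * ∫ ω, |g l (ξ l ω)| ∂P) :
    Integrable (fun ω => g (L ω) (ξ (L ω) ω)) P := by
  rw [← integrableOn_univ, ← Set.iUnion_preimage_singleton_eq_univ L]
  refine integrableOn_iUnion_of_summable_integral_norm (fun l => ?_) ?_
  · exact (hint l).integrableOn.congr_fun (fun ω (hω : L ω = l) => by simp only [hω])
      (hL (measurableSet_singleton l))
  · simpa only [Real.norm_eq_abs,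
      setIntegral_comp_randomIndex hL hξ hind (g := fun l x => |g l x|)
        (fun l => (hg l).abs)] using hsum

lemma hasSum_integral_comp_randomIndex [Countable ι] (hL : Measurable L)
    (hξ : ∀ l, Measurable (ξ l)) (hind : IndepFun L (fun ω l => ξ l ω) P) {g : ι → E → ℝ}
    (hg : ∀ l, Measurable (g l))
    (hint : Integrable (fun ω => g (L ω) (ξ (L ω) ω)) P) :
    HasSum (fun l => P.real (L ⁻¹' {l}) * ∫ ω, g l (ξ l ω) ∂P)
      (∫ ω, g (L ω) (ξ (L ω) ω) ∂P) := by
  have h := hasSum_integral_iUnion (fun l => hL (measurableSet_singleton l))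
    (pairwise_disjoint_fiber L) hint.integrableOn
  rwa [Set.iUnion_preimage_singleton_eq_univ, setIntegral_univ,
    funext (setIntegral_comp_randomIndex hL hξ hind hg)] at h

end RandomIndex

lemma measureReal_preimage_singleton_of_law {Ω ι : Type*} [MeasurableSpace Ω] {P : Measure Ω}
    {L : Ω → ι} {p : ι → ℝ} (hlaw : ∀ l, P {ω | L ω = l} = ENNReal.ofReal (p l)) {l : ι}
    (hpl : 0 ≤ p l) : P.real (L ⁻¹' {l}) = p l := by
  rw [measureReal_def, ← ENNReal.toReal_ofReal hpl, ← hlaw]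
  rfl

section SingleTermEstimator

variable {Ω ι : Type*} [MeasurableSpace Ω] [Countable ι] [MeasurableSpace ι]
  [MeasurableSingletonClass ι] {P : Measure Ω} {L : Ω → ι} {ξ : ι → Ω → ℝ} {p : ι → ℝ}

lemma memLp_two_singleTermEstimator (hL : Measurable L) (hξ : ∀ l, Measurable (ξ l))
    (hind : IndepFun L (fun ω l => ξ l ω) P) (hp : ∀ l, 0 < p l)
    (hlaw : ∀ l, P {ω | L ω = l} = ENNReal.ofReal (p l)) (hξ2 : ∀ l, MemLp (ξ l) 2 P)
    (hsum : Summable fun l => (∫ ω, ξ l ω ^ 2 ∂P) / p l) :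
    MemLp (fun ω => ξ (L ω) ω / p (L ω)) 2 P := by
  have hZ : Measurable fun ω => ξ (L ω) ω / p (L ω) :=
    (measurable_from_prod_countable_left (f := fun q : Ω × ι => ξ q.2 q.1 / p q.2)
      fun l => (hξ l).div_const (p l)).comp (measurable_id.prodMk hL)
  rw [memLp_two_iff_integrable_sq hZ.aestronglyMeasurable]
  have hsq : ∀ l, (fun ω => (ξ l ω / p l) ^ 2) = fun ω => ξ l ω ^ 2 / p l ^ 2 :=
    fun l => funext fun ω => div_pow _ _ _
  refine integrable_comp_randomIndex hL hξ hind (g := fun l x => (x / p l) ^ 2)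
    (fun l => by fun_prop) (fun l => ?_) ?_
  · simpa only [hsq] using (hξ2 l).integrable_sq.div_const (p l ^ 2)
  · refine hsum.congr fun l => ?_
    simp only [abs_sq, hsq, integral_div, measureReal_preimage_singleton_of_law hlaw (hp l).le]
    field_simp [(hp l).ne']

lemma hasSum_integral_singleTermEstimator (hL : Measurable L) (hξ : ∀ l, Measurable (ξ l))
    (hind : IndepFun L (fun ω l => ξ l ω) P) (hp : ∀ l, 0 < p l)
    (hlaw : ∀ l, P {ω | L ω = l} = ENNReal.ofReal (p l))
    (hint : Integrable (fun ω => ξ (L ω) ω / p (L ω)) P) :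
    HasSum (fun l => ∫ ω, ξ l ω ∂P) (∫ ω, ξ (L ω) ω / p (L ω) ∂P) := by
  convert hasSum_integral_comp_randomIndex hL hξ hind (g := fun l x => x / p l)
    (fun l => measurable_id.div_const _) hint using 1
  funext l
  rw [measureReal_preimage_singleton_of_law hlaw (hp l).le, integral_div,
    mul_div_cancel₀ _ (hp l).ne']

end SingleTermEstimator

lemma rpow_neg_two_mul_natCast {b : ℝ} (hb : 0 ≤ b) (β : ℝ) (l : ℕ) :
    b ^ (-(2 * β * l)) = ((b ^ (-β)) ^ l) ^ 2 := by
  rw [← Real.rpow_natCast, ← Real.rpow_natCast, ← Real.rpow_mul hb, ← Real.rpow_mul hb]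
  ring_nf

theorem exists_pmf_single_term_estimator_unbiased_general
    {Ω : Type*} [MeasurableSpace Ω] (P : Measure Ω) [IsProbabilityMeasure P]
    (ξ : ℕ → Ω → ℝ) (hξmeas : ∀ l, Measurable (ξ l))
    (a : ℕ → ℝ) (alim : ℝ)
    (ha0 : ∫ ω, ξ 0 ω ∂P = a 0)
    (hainc : ∀ l : ℕ, 1 ≤ l → ∫ ω, ξ l ω ∂P = a l - a (l - 1))
    (halim : Tendsto a atTop (nhds alim))
    (hξ2 : ∀ l, MemLp (ξ l) 2 P)
    (C β : ℝ) (hβ : 0 < β)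
    (hmom : ∀ l : ℕ, ∫ ω, (ξ l ω) ^ 2 ∂P ≤ C * ((2 : ℝ) ^ (-(2 * β * l)))) :
    ∃ p : ℕ → ℝ, (∀ l, 0 < p l) ∧ (∑' l, p l = 1) ∧
      ∀ L : Ω → ℕ, Measurable L →
        (∀ l, P {ω | L ω = l} = ENNReal.ofReal (p l)) →
        IndepFun L (fun ω => fun l => ξ l ω) P →
        MemLp (fun ω => ξ (L ω) ω / p (L ω)) 2 P ∧
        ∫ ω, ξ (L ω) ω / p (L ω) ∂P = alim := by
  set r : ℝ := 2 ^ (-β)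
  have hr0 : 0 < r := by positivity
  have hr1 : r < 1 := Real.rpow_lt_one_of_one_lt_of_neg one_lt_two (neg_neg_of_pos hβ)
  have hp : ∀ l, 0 < (1 - r) * r ^ l := fun l => mul_pos (sub_pos.2 hr1) (pow_pos hr0 l)
  refine ⟨_, hp, ?_, fun L hL hlaw hind => ?_⟩
  · rw [tsum_mul_left, tsum_geometric_of_lt_one hr0.le hr1, mul_inv_cancel₀ (sub_pos.2 hr1).ne']
  have hbound : ∀ l, (∫ ω, ξ l ω ^ 2 ∂P) / ((1 - r) * r ^ l) ≤ C / (1 - r) * r ^ l := by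
    intro l
    calc (∫ ω, ξ l ω ^ 2 ∂P) / ((1 - r) * r ^ l) ≤ C * (r ^ l) ^ 2 / ((1 - r) * r ^ l) := by
          rw [← rpow_neg_two_mul_natCast zero_le_two]
          exact div_le_div_of_nonneg_right (hmom l) (hp l).le
      _ = C / (1 - r) * r ^ l := by field_simp [(sub_pos.2 hr1).ne', hr0.ne']
  have hsum : Summable fun l => (∫ ω, ξ l ω ^ 2 ∂P) / ((1 - r) * r ^ l) :=
    .of_nonneg_of_le (fun l => div_nonneg (integral_nonneg fun ω => sq_nonneg _) (hp l).le)
      hbound ((summable_geometric_of_lt_one hr0.le hr1).mul_left _)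
  have hZ := memLp_two_singleTermEstimator hL hξmeas hind hp hlaw hξ2 hsum
  exact ⟨hZ, (hasSum_integral_singleTermEstimator hL hξmeas hind hp hlaw
    (hZ.integrable one_le_two)).eq_of_tendsto_telescoping ha0 hainc halim⟩

/-- main theorem, single-term form: if the independent increment
estimators `ξ_l` are unbiased for the increments `a_l − a_{l−1}` with
`a_l → a`, and their second moments decay geometrically,
`E[ξ_l²] ≤ C 2^{−2βl}`, then there is a positive probability mass function `p`
on ℕ such that for every `L ∼ p` independent of `(ξ_l)` the single-term
estimator `ξ_L / p(L)` is square-integrable and unbiased for `a`. -/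
theorem exists_pmf_single_term_estimator_unbiased
    {Ω : Type*} [MeasurableSpace Ω] (P : Measure Ω) [IsProbabilityMeasure P]
    (ξ : ℕ → Ω → ℝ) (hξmeas : ∀ l, Measurable (ξ l))
    (hξint : ∀ l, Integrable (ξ l) P)
    (hξindep : iIndepFun ξ P)
    (a : ℕ → ℝ) (alim : ℝ)
    (ha0 : ∫ ω, ξ 0 ω ∂P = a 0)
    (hainc : ∀ l : ℕ, 1 ≤ l → ∫ ω, ξ l ω ∂P = a l - a (l - 1))
    (halim : Tendsto a atTop (nhds alim))
    (hξ2 : ∀ l, MemLp (ξ l) 2 P)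
    (C β : ℝ) (hβ : 0 < β)
    (hmom : ∀ l : ℕ, ∫ ω, (ξ l ω) ^ 2 ∂P ≤ C * ((2 : ℝ) ^ (-(2 * β * l)))) :
    ∃ p : ℕ → ℝ, (∀ l, 0 < p l) ∧ (∑' l, p l = 1) ∧
      ∀ L : Ω → ℕ, Measurable L →
        (∀ l, P {ω | L ω = l} = ENNReal.ofReal (p l)) →
        IndepFun L (fun ω => fun l => ξ l ω) P →
        MemLp (fun ω => ξ (L ω) ω / p (L ω)) 2 P ∧
        ∫ ω, ξ (L ω) ω / p (L ω) ∂P = alim :=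
  exists_pmf_single_term_estimator_unbiased_general P ξ hξmeas a alim ha0 hainc halim hξ2 C β hβ
    hmom
end
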